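/- Assume G is a directed po-group and n ≥ 1. Then: (a) the map s₀ : E → ℝ sending each z ∈ E_k to k/n (k = 0, 1, …, n) is a state on E; (b) every state on E equals s₀; in particular E = [0̄, u_n] possesses exactly one state. -/

import Mathlib

open Function

variable {I G : Type*}

def kmul [Mul G] (φ : Equiv.Perm I) (p q : ℤ × (I → G)) : ℤ × (I → G) :=
  (p.1 + q.1, fun i => p.2 i * q.2 ((φ ^ p.1) i))

def kone [One G] : ℤ × (I → G) := (0, fun _ => 1)

def kunit [One G] (n : ℤ) : ℤ × (I → G) := (n, fun _ => 1)

def kle [LE G] (p q : ℤ × (I → G)) : Prop :=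
  p.1 < q.1 ∨ (p.1 = q.1 ∧ ∀ i, p.2 i ≤ q.2 i)

def kE [One G] [LE G] (n : ℤ) : Set (ℤ × (I → G)) :=
  {z | kle kone z ∧ kle z (kunit n)}

/-- A state on `E = [0̄, u_n]`: a `[0,1]`-valued function with `s(u_n) = 1` which is
additive on products of elements of `E` staying below `u_n`. -/
def kIsState [Group G] [PartialOrder G] (φ : Equiv.Perm I) (n : ℤ)
    (s : (ℤ × (I → G)) → ℝ) : Prop :=
  (∀ z ∈ kE n, s z ∈ Set.Icc (0 : ℝ) 1) ∧
  s (kunit n) = 1 ∧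
  (∀ a ∈ kE n, ∀ b ∈ kE n, kle (kmul φ a b) (kunit n) →
    s (kmul φ a b) = s a + s b)

/-! The unit `u_n` is a product of `n` copies of `u_1`, so additivity forces `s (u_k) = k/n`.
An element `(0, x)` with `x ≥ 1` has value `0`: its powers all stay in `E`, so additivity and
`s ≤ 1` leave no room for a positive value. Now any `(k, x) ∈ E` and `u_k` lie below a common
`(k, c) ≤ u_n` (directedness; for `k = n` take `c = 1`), and `(k, c)` is `(k, x)` multiplied
by an element of the form `(0, y)` with `y ≥ 1`, so `s (k, x) = s (k, c) = s (u_k) = k/n`. -/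

lemma kle.fst_le [LE G] {p q : ℤ × (I → G)} (h : kle p q) : p.1 ≤ q.1 :=
  h.elim le_of_lt fun h => h.1.le

lemma fst_mem_Icc_of_mem_kE [One G] [LE G] {n : ℤ} {z : ℤ × (I → G)} (hz : z ∈ kE n) :
    z.1 ∈ Set.Icc 0 n :=
  ⟨hz.1.fst_le, hz.2.fst_le⟩

lemma mk_zero_mem_kE [One G] [LE G] {n : ℤ} (hn : 0 < n) {x : I → G} (hx : 1 ≤ x) :
    ((0, x) : ℤ × (I → G)) ∈ kE n :=
  ⟨Or.inr ⟨rfl, hx⟩, Or.inl hn⟩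

lemma kunit_kle_kunit [One G] [Preorder G] {k m : ℤ} (h : k ≤ m) :
    kle (kunit k : ℤ × (I → G)) (kunit m) :=
  h.lt_or_eq.imp id fun h => ⟨h, fun _ => le_rfl⟩

lemma kunit_mem_kE [One G] [Preorder G] {k n : ℤ} (h0 : 0 ≤ k) (hk : k ≤ n) :
    (kunit k : ℤ × (I → G)) ∈ kE n :=
  ⟨kunit_kle_kunit h0, kunit_kle_kunit hk⟩

section Mul

variable (φ : Equiv.Perm I)

lemma kmul_kunit [MulOneClass G] (k m : ℤ) :
    kmul φ (kunit k : ℤ × (I → G)) (kunit m) = kunit (k + m) := by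
  simp [kmul, kunit]

lemma kmul_mk_zero [Mul G] (k : ℤ) (x y : I → G) :
    kmul φ ((k, x) : ℤ × (I → G)) (0, y) = (k, x * y ∘ ⇑(φ ^ k)) :=
  Prod.ext (add_zero k) rfl

lemma kmul_zero_zero [Mul G] (x y : I → G) :
    kmul φ ((0, x) : ℤ × (I → G)) (0, y) = (0, x * y) := by
  simpa using kmul_mk_zero φ 0 x y

end Mul

lemma kIsState_fst_div [Group G] [PartialOrder G] (φ : Equiv.Perm I) {n : ℤ} (hn : 0 < n) :
    kIsState φ n (fun z : ℤ × (I → G) => (z.1 : ℝ) / n) := by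
  have hnR : (0 : ℝ) < n := by exact_mod_cast hn
  refine ⟨fun z hz => ?_, div_self hnR.ne', fun a _ b _ _ => ?_⟩
  · obtain ⟨h0, hk⟩ := fst_mem_Icc_of_mem_kE hz
    exact ⟨by positivity, (div_le_one hnR).2 (by exact_mod_cast hk)⟩
  · simp only [kmul, Int.cast_add, add_div]

namespace kIsState

variable [Group G] [PartialOrder G] {φ : Equiv.Perm I} {n : ℤ} {s : ℤ × (I → G) → ℝ}
  (hs : kIsState φ n s)
include hs

lemma map_kunit_zero (hn : 0 ≤ n) : s (kunit 0) = 0 := by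
  have h0 := kunit_mem_kE (I := I) (G := G) le_rfl hn
  have h := hs.2.2 _ h0 _ h0 (by rw [kmul_kunit]; exact h0.2)
  rw [kmul_kunit, add_zero] at h
  linarith

lemma map_kunit {k : ℤ} (hk0 : 0 ≤ k) (hkn : k ≤ n) : s (kunit k) = k * s (kunit 1) := by
  induction k, hk0 using Int.leInduction with
  | base => simp [hs.map_kunit_zero hkn]
  | succ k hk0 ih =>
    have h := hs.2.2 _ (kunit_mem_kE hk0 (by omega)) _ (kunit_mem_kE zero_le_one (by omega))
      (by rw [kmul_kunit]; exact kunit_kle_kunit hkn)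
    rw [kmul_kunit] at h
    rw [h, ih (by omega)]
    push_cast
    ring

lemma map_kunit_one (hn : 0 < n) : s (kunit 1) = 1 / n := by
  have h := hs.map_kunit hn.le le_rfl
  rw [hs.2.1] at h
  have hnR : (n : ℝ) ≠ 0 := by exact_mod_cast hn.ne'
  rw [eq_div_iff hnR]
  linarith

variable [MulLeftMono G]

lemma map_mk_zero (hn : 0 < n) {x : I → G} (hx : 1 ≤ x) : s (0, x) = 0 := by
  have hpow : ∀ m : ℕ, 1 ≤ x ^ m := fun m i => one_le_pow_of_one_le' (hx i) m
  have hmul : ∀ m : ℕ, s (0, x ^ m) = m * s (0, x) := by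
    intro m
    induction m with
    | zero =>
      rw [pow_zero, Nat.cast_zero, zero_mul]
      exact hs.map_kunit_zero hn.le
    | succ m ih =>
      have h := hs.2.2 _ (mk_zero_mem_kE hn (hpow m)) _ (mk_zero_mem_kE hn hx)
        (by rw [kmul_zero_zero]; exact Or.inl hn)
      rw [kmul_zero_zero, ← pow_succ] at h
      rw [h, ih]
      push_cast
      ring
  have hbound : ∀ m : ℕ, (m : ℝ) * s (0, x) ≤ 1 := fun m =>
    hmul m ▸ (hs.1 _ (mk_zero_mem_kE hn (hpow m))).2
  have hnonneg := (hs.1 _ (mk_zero_mem_kE hn hx)).1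
  by_contra hne
  have hpos : 0 < s (0, x) := hnonneg.lt_of_ne' hne
  obtain ⟨m, hm⟩ := exists_nat_gt (1 / s (0, x))
  exact (hbound m).not_gt ((div_lt_iff₀ hpos).1 hm)

lemma map_mk_eq_of_le (hn : 0 < n) {k : ℤ} {x c : I → G} (hmem : ((k, x) : ℤ × (I → G)) ∈ kE n)
    (hxc : x ≤ c) (hc : kle ((k, c) : ℤ × (I → G)) (kunit n)) : s (k, c) = s (k, x) := by
  set y : I → G := (x⁻¹ * c) ∘ ⇑(φ ^ k)⁻¹
  have hy : 1 ≤ y := fun i => le_inv_mul_iff_le.2 (hxc _)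
  have hxy : ((k, c) : ℤ × (I → G)) = kmul φ (k, x) (0, y) := by
    rw [kmul_mk_zero]
    ext i
    · rfl
    · simp [y]
  have h := hs.2.2 _ hmem _ (mk_zero_mem_kE hn hy) (hxy ▸ hc)
  rw [hxy, h, hs.map_mk_zero hn hy, add_zero]

end kIsState

lemma exists_upper_bound_kle_kunit [One G] [Preorder G] (hdir : ∀ a b : G, ∃ c, a ≤ c ∧ b ≤ c)
    {n k : ℤ} {x : I → G} (hx : kle ((k, x) : ℤ × (I → G)) (kunit n)) :
    ∃ c : I → G, x ≤ c ∧ 1 ≤ c ∧ kle ((k, c) : ℤ × (I → G)) (kunit n) := by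
  rcases hx with hk | ⟨hk, hx1⟩
  · choose c hxc h1c using fun i => hdir (x i) 1
    exact ⟨c, hxc, h1c, Or.inl hk⟩
  · exact ⟨1, hx1, le_rfl, Or.inr ⟨hk, fun _ => le_rfl⟩⟩

lemma kIsState.eq_fst_div [Group G] [PartialOrder G] [MulLeftMono G]
    (hdir : ∀ a b : G, ∃ c, a ≤ c ∧ b ≤ c) {φ : Equiv.Perm I} {n : ℤ} (hn : 0 < n)
    {s : ℤ × (I → G) → ℝ} (hs : kIsState φ n s) {z : ℤ × (I → G)} (hz : z ∈ kE n) :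
    s z = z.1 / n := by
  obtain ⟨k, x⟩ := z
  obtain ⟨hk0, hkn⟩ := fst_mem_Icc_of_mem_kE hz
  obtain ⟨c, hxc, h1c, hc⟩ := exists_upper_bound_kle_kunit hdir hz.2
  calc s (k, x) = s (k, c) := (hs.map_mk_eq_of_le hn hz hxc hc).symm
    _ = s (kunit k) := hs.map_mk_eq_of_le hn (kunit_mem_kE hk0 hkn) h1c hc
    _ = k / n := by rw [hs.map_kunit hk0 hkn, hs.map_kunit_one hn, mul_one_div]

theorem stmt10_general [Group G] [PartialOrder G]
    [CovariantClass G G (· * ·) (· ≤ ·)]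
    (hdir : ∀ a b : G, ∃ c, a ≤ c ∧ b ≤ c)
    (φ : Equiv.Perm I) (n : ℤ) (hn : 1 ≤ n) :
    kIsState φ n (fun z : ℤ × (I → G) => (z.1 : ℝ) / (n : ℝ)) ∧
    ∀ s : (ℤ × (I → G)) → ℝ, kIsState φ n s →
      ∀ z ∈ kE (I := I) (G := G) n, s z = (z.1 : ℝ) / (n : ℝ) :=
  ⟨kIsState_fst_div φ hn, fun _ hs _ hz => hs.eq_fst_div hdir hn hz⟩

/-- (a) the map sending each `z ∈ E_k` to `k/n` is a state on `E`;
(b) every state on `E` equals it, so `E` possesses exactly one state. -/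
theorem stmt10 [Group G] [PartialOrder G]
    [CovariantClass G G (· * ·) (· ≤ ·)] [CovariantClass G G (swap (· * ·)) (· ≤ ·)]
    (hdir : ∀ a b : G, ∃ c, a ≤ c ∧ b ≤ c)
    (φ : Equiv.Perm I) (n : ℤ) (hn : 1 ≤ n) :
    kIsState φ n (fun z : ℤ × (I → G) => (z.1 : ℝ) / (n : ℝ)) ∧
    ∀ s : (ℤ × (I → G)) → ℝ, kIsState φ n s →
      ∀ z ∈ kE (I := I) (G := G) n, s z = (z.1 : ℝ) / (n : ℝ) :=
  stmt10_general hdir φ n hn
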